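/- arXiv:2005.11188 — 8 statements merged into one kernel-verified Lean document; each statement's English description precedes it below -/
import Mathlib

section
/- Let (y_0,...,y_{n-1}) be a 1-difference sequence of integers. If 0 ≤ x < n, y > y_x, and FL(x,y) = i for some i < n (i.e., the FL query has an answer), then y_i = y exactly. -/
/-- `y₀,…,y_{n-1}` is a 1-difference sequence: `|y i - y (i-1)| ≤ 1` for `i = 1,…,n-1`. -/
def OneDiff (n : ℕ) (y : ℕ → ℤ) : Prop :=
  ∀ i : ℕ, 1 ≤ i → i < n → |y i - y (i - 1)| ≤ 1

/-- `FL n y x Y = min({i | x ≤ i ≤ n-1, y i ≥ Y} ∪ {n})`. -/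
noncomputable def FL (n : ℕ) (y : ℕ → ℤ) (x : ℕ) (Y : ℤ) : ℕ :=
  sInf ({i | x ≤ i ∧ i < n ∧ Y ≤ y i} ∪ {n})

/-- `(a,b)` is down-left reachable from `(x,Y)`:
`0 ≤ a ≤ x`, `y a ≤ b ≤ Y`, and `y i < Y` for all `a ≤ i < x`. -/
def DLR (n : ℕ) (y : ℕ → ℤ) (x : ℕ) (Y : ℤ) (a : ℕ) (b : ℤ) : Prop :=
  a ≤ x ∧ y a ≤ b ∧ b ≤ Y ∧ ∀ i : ℕ, a ≤ i → i < x → y i < Y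

/-- `v` is the valley of `(x,Y)`: `(v, y v)` is down-left reachable from `(x,Y)`,
`y v` is the minimal second coordinate over all down-left reachable points, and
`v` is the largest index realizing that minimum. -/
def IsValley (n : ℕ) (y : ℕ → ℤ) (x : ℕ) (Y : ℤ) (v : ℕ) : Prop :=
  DLR n y x Y v (y v) ∧ (∀ a b, DLR n y x Y a b → y v ≤ b) ∧
    (∀ a, DLR n y x Y a (y a) → y a = y v → a ≤ v)

theorem stmt2 (n : ℕ) (y : ℕ → ℤ) (h : OneDiff n y) (x : ℕ) (Y : ℤ)
    (hx : x < n) (hY : y x < Y) (hFL : FL n y x Y < n) :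
    y (FL n y x Y) = Y := by
  set i := FL n y x Y with hi
  have hne : ({j | x ≤ j ∧ j < n ∧ Y ≤ y j} ∪ {n} : Set ℕ).Nonempty :=
    ⟨n, Or.inr rfl⟩
  have hmem : i ∈ ({j | x ≤ j ∧ j < n ∧ Y ≤ y j} ∪ {n} : Set ℕ) :=
    Nat.sInf_mem hne
  have hmem' : x ≤ i ∧ i < n ∧ Y ≤ y i := by
    rcases hmem with h' | h'
    · exact h'
    · exact absurd (Set.mem_singleton_iff.mp h' ▸ hFL) (lt_irrefl n)
  obtain ⟨hxi, hin, hYi⟩ := hmem'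
  -- x ≠ i since y x < Y
  have hxlti : x < i := by
    rcases lt_or_eq_of_le hxi with h' | h'
    · exact h'
    · exact absurd hYi (by rw [← h']; exact not_le.mpr hY)
  have h1i : 1 ≤ i := Nat.one_le_iff_ne_zero.mpr (by omega)
  -- i - 1 not in set
  have hlt : i - 1 < sInf ({j | x ≤ j ∧ j < n ∧ Y ≤ y j} ∪ {n} : Set ℕ) := by
    rw [← FL, ← hi]; omega
  have hnotmem : i - 1 ∉ ({j | x ≤ j ∧ j < n ∧ Y ≤ y j} ∪ {n} : Set ℕ) :=
    Nat.notMem_of_lt_sInf hlt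
  have hypred : y (i - 1) < Y := by
    by_contra hc
    exact hnotmem (Or.inl ⟨by omega, by omega, not_lt.mp hc⟩)
  have habs := h i h1i hin
  have := abs_le.mp habs
  omega
end

section
/- Let (y_0,...,y_{n-1}) be an integer sequence, 0 ≤ x̂ ≤ n-1, let y' ≥ y_{x̂} be an integer, and suppose x' = FL(x̂, y') < n. Then (x̂, y_{x̂}) is down-left reachable from (x', y_{x'}). Consequently, if x̄ = Valley(x', y_{x'}), then y_{x̄} ≤ y_{x̂}. -/
theorem stmt10 (n : ℕ) (y : ℕ → ℤ) (xh : ℕ) (Y' : ℤ) (hxh : xh < n)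
    (hY' : y xh ≤ Y') (hFL : FL n y xh Y' < n) :
    DLR n y (FL n y xh Y') (y (FL n y xh Y')) xh (y xh) ∧
    ∀ xb, IsValley n y (FL n y xh Y') (y (FL n y xh Y')) xb → y xb ≤ y xh := by
  set S : Set ℕ := {i | xh ≤ i ∧ i < n ∧ Y' ≤ y i} ∪ {n} with hS
  have hmem : FL n y xh Y' ∈ S := Nat.sInf_mem ⟨n, Or.inr rfl⟩
  have hmem' : xh ≤ FL n y xh Y' ∧ FL n y xh Y' < n ∧ Y' ≤ y (FL n y xh Y') := by
    rcases hmem with h | h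
    · exact h
    · simp only [Set.mem_singleton_iff] at h; omega
  have hdlr : DLR n y (FL n y xh Y') (y (FL n y xh Y')) xh (y xh) := by
    refine ⟨hmem'.1, le_refl _, le_trans hY' hmem'.2.2, fun i hi hilt => ?_⟩
    have hni : i ∉ S := Nat.notMem_of_lt_sInf hilt
    have : ¬(xh ≤ i ∧ i < n ∧ Y' ≤ y i) := fun h => hni (Or.inl h)
    have hin : i < n := lt_trans hilt hFL
    have : ¬ (Y' ≤ y i) := fun h => this ⟨hi, hin, h⟩
    linarith [hmem'.2.2]
  exact ⟨hdlr, fun xb hv => hv.2.1 xh (y xh) hdlr⟩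
end

section
/- Let (y_0,...,y_{n-1}) be a 1-difference sequence, let 0 ≤ x' < n, and let x̄ = Valley(x', y_{x'}). Then for every integer j with y_{x̄} ≤ j ≤ y_{x'}, the set I_j = {i : x̄ ≤ i ≤ x' and y_i = j} is nonempty, and Valley(min I_j, y_{min I_j}) = x̄. -/
/-- Discrete intermediate value theorem for 1-difference sequences. -/
lemma ivt (n : ℕ) (y : ℕ → ℤ) (h : OneDiff n y) (j : ℤ) :
    ∀ b a : ℕ, a ≤ b → b < n → y a ≤ j → j ≤ y b →
      ∃ k, a ≤ k ∧ k ≤ b ∧ y k = j := by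
  intro b
  induction b with
  | zero =>
    intro a hab _ h1 h2
    interval_cases a
    exact ⟨0, le_refl _, le_refl _, le_antisymm h1 h2⟩
  | succ b ih =>
    intro a hab hbn h1 h2
    by_cases he : y (b + 1) = j
    · exact ⟨b + 1, hab, le_refl _, he⟩
    · have hlt : j < y (b + 1) := lt_of_le_of_ne h2 (Ne.symm he)
      have hane : a ≠ b + 1 := by
        rintro rfl; exact absurd hlt (not_lt.mpr h1)
      have hab' : a ≤ b := Nat.lt_succ_iff.mp (lt_of_le_of_ne hab hane)
      have hd := h (b + 1) (Nat.le_add_left 1 b) hbn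
      simp only [Nat.add_sub_cancel] at hd
      have : j ≤ y b := by
        have := abs_le.mp hd
        omega
      obtain ⟨k, hk1, hk2, hk3⟩ := ih a hab' (Nat.lt_of_succ_lt hbn) h1 this
      exact ⟨k, hk1, Nat.le_succ_of_le hk2, hk3⟩

theorem stmt11 (n : ℕ) (y : ℕ → ℤ) (h : OneDiff n y) (x' xb : ℕ) (hx' : x' < n)
    (hv : IsValley n y x' (y x') xb) (j : ℤ) (hj1 : y xb ≤ j) (hj2 : j ≤ y x') :
    (∃ i, xb ≤ i ∧ i ≤ x' ∧ y i = j) ∧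
    ∀ i₀, xb ≤ i₀ → i₀ ≤ x' → y i₀ = j → (∀ i, xb ≤ i → i < i₀ → y i ≠ j) →
      IsValley n y i₀ (y i₀) xb := by
  obtain ⟨⟨hxb1, _, _, hxb4⟩, hmin, hmax⟩ := hv
  constructor
  · exact ivt n y h j x' xb hxb1 hx' hj1 hj2
  · intro i₀ hi₀1 hi₀2 hi₀3 hne
    -- below i₀ and above xb, the sequence stays below j
    have key : ∀ i, xb ≤ i → i < i₀ → y i < j := by
      intro i hi1 hi2
      by_contra hc
      push_neg at hc
      obtain ⟨k, hk1, hk2, hk3⟩ :=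
        ivt n y h j i xb hi1 (lt_trans (lt_of_lt_of_le hi2 hi₀2) hx') hj1 hc
      exact hne k hk1 (lt_of_le_of_lt hk2 hi2) hk3
    -- any DLR point from (i₀, y i₀) is DLR from (x', y x')
    have lift : ∀ a b, DLR n y i₀ (y i₀) a b → DLR n y x' (y x') a b := by
      rintro a b ⟨ha1, ha2, ha3, ha4⟩
      refine ⟨le_trans ha1 hi₀2, ha2, le_trans ha3 (hi₀3 ▸ hj2), ?_⟩
      intro i hia hix
      rcases lt_or_ge i i₀ with hlt | hge
      · exact lt_of_lt_of_le (hi₀3 ▸ ha4 i hia hlt) (hi₀3 ▸ hj2)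
      · exact hxb4 i (le_trans hi₀1 hge) hix
    refine ⟨⟨hi₀1, le_refl _, hi₀3 ▸ hj1, fun i hi1 hi2 => hi₀3 ▸ key i hi1 hi2⟩,
      fun a b hd => hmin a b (lift a b hd),
      fun a hd he => hmax a (lift a (y a) hd) he⟩
end

section
/- Let (y_0,...,y_{n-1}) be a 1-difference sequence, 0 ≤ x' < n, x̄ = Valley(x', y_{x'}), and define Weight(x̄) = |{x ∈ {x̄,...,n-1} : Valley(x, y_x) = x̄}|. Then Weight(x̄) ≥ y_{x'} - y_{x̄} + 1. -/
/-- `Weight a = |{x ∈ {a,…,n-1} : Valley(x, y x) = a}|`. -/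
noncomputable def Weight (n : ℕ) (y : ℕ → ℤ) (a : ℕ) : ℕ :=
  Set.ncard {x | a ≤ x ∧ x < n ∧ IsValley n y x (y x) a}

theorem stmt12 (n : ℕ) (y : ℕ → ℤ) (h : OneDiff n y) (x' xb : ℕ) (hx' : x' < n)
    (hv : IsValley n y x' (y x') xb) :
    y x' - y xb + 1 ≤ (Weight n y xb : ℤ) := by
  obtain ⟨⟨hxb_le, -, hyle, hbelow⟩, hmin, hmax⟩ := hv
  have key : ∀ j : ℤ, y xb ≤ j → j ≤ y x' →
      ∃ i, xb ≤ i ∧ i < n ∧ y i = j ∧ IsValley n y i (y i) xb := by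
    intro j hj1 hj2
    set T : Set ℕ := {i | xb ≤ i ∧ i < n ∧ j ≤ y i} with hT
    have hx'T : x' ∈ T := ⟨hxb_le, hx', hj2⟩
    set i := sInf T with hi
    have hiT : i ∈ T := Nat.sInf_mem ⟨x', hx'T⟩
    obtain ⟨hxbi, hin, hji⟩ := hiT
    have hix' : i ≤ x' := Nat.sInf_le hx'T
    have hlt : ∀ k, xb ≤ k → k < i → y k < j := by
      intro k hk1 hk2
      by_contra hc
      push_neg at hc
      have hkT : k ∈ T := ⟨hk1, hk2.trans hin, hc⟩
      exact absurd (Nat.sInf_le hkT) (not_le.mpr hk2)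
    have hyi : y i = j := by
      rcases eq_or_lt_of_le hxbi with heq | hlt'
      · have : y i = y xb := by rw [← heq]
        omega
      · have h1i : 1 ≤ i := Nat.one_le_iff_ne_zero.mpr (by omega)
        have hprev : y (i - 1) < j := hlt (i - 1) (by omega) (by omega)
        have := h i h1i hin
        rw [abs_le] at this
        omega
    -- lift DLR from (i, y i) to (x', y x')
    have lift : ∀ a b, DLR n y i (y i) a b → DLR n y x' (y x') a b := by
      rintro a b ⟨ha, hb1, hb2, hbel⟩
      refine ⟨ha.trans hix', hb1, by omega, ?_⟩
      intro k hk1 hk2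
      rcases lt_or_ge k i with hki | hki
      · have := hbel k hk1 hki
        omega
      · exact hbelow k (hxbi.trans hki) hk2
    refine ⟨i, hxbi, hin, hyi, ?_, ?_, ?_⟩
    · exact ⟨hxbi, le_refl _, by omega, fun k hk1 hk2 => by
        have := hlt k hk1 hk2; omega⟩
    · exact fun a b hab => hmin a b (lift a b hab)
    · exact fun a hab hae => hmax a (lift a (y a) hab) hae
  classical
  set S : Set ℕ := {x | xb ≤ x ∧ x < n ∧ IsValley n y x (y x) xb} with hS
  have hSfin : S.Finite :=
    (Set.finite_Iio n).subset (fun x hx => hx.2.1)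
  set f : ℤ → ℕ := fun j =>
    if hj : y xb ≤ j ∧ j ≤ y x' then (key j hj.1 hj.2).choose else 0 with hf
  have hfS : ∀ j ∈ Set.Icc (y xb) (y x'), f j ∈ S := by
    rintro j ⟨hj1, hj2⟩
    simp only [hf, dif_pos (And.intro hj1 hj2)]
    obtain ⟨h1, h2, h3, h4⟩ := (key j hj1 hj2).choose_spec
    exact ⟨h1, h2, h4⟩
  have hfy : ∀ j ∈ Set.Icc (y xb) (y x'), y (f j) = j := by
    rintro j ⟨hj1, hj2⟩
    simp only [hf, dif_pos (And.intro hj1 hj2)]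
    exact (key j hj1 hj2).choose_spec.2.2.1
  have hinj : Set.InjOn f (Set.Icc (y xb) (y x')) := by
    intro a ha b hb hab
    rw [← hfy a ha, ← hfy b hb, hab]
  have h1 : (Set.Icc (y xb) (y x')).ncard ≤ S.ncard := by
    calc (Set.Icc (y xb) (y x')).ncard
        = (f '' Set.Icc (y xb) (y x')).ncard := (Set.ncard_image_of_injOn hinj).symm
      _ ≤ S.ncard := Set.ncard_le_ncard (Set.image_subset_iff.mpr hfS) hSfin
  have h2 : (Set.Icc (y xb) (y x')).ncard = (y x' + 1 - y xb).toNat := by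
    rw [← Finset.coe_Icc, Set.ncard_coe_finset, Int.card_Icc]
  rw [Weight]
  rw [← hS]
  omega
end

section
/- Let κ ≥ 3 be an integer and κ' = ⌈(2κ+2)/(κ-2)⌉. Let (y_0,...,y_{n-1}) be a 1-difference sequence, let p ≥ 1, x̂ ∈ {1,...,n-1}, and let y be an integer with y ≤ y_{x̂} + (2κ+2)p - 2. Suppose x' = FL(x̂, y_{x̂} + (κ-2)p) < n and x̄ = Valley(x', y_{x'}). Then y ≤ y_{x̄} + κ'·(Weight(x̄) - 1) - 2, where Weight(x̄) = |{x ≥ x̄ : Valley(x,y_x) = x̄}|. -/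
lemma FL_spec (n : ℕ) (y : ℕ → ℤ) (x : ℕ) (Y : ℤ) (hlt : FL n y x Y < n) :
    x ≤ FL n y x Y ∧ FL n y x Y < n ∧ Y ≤ y (FL n y x Y) := by
  have hne : ({i | x ≤ i ∧ i < n ∧ Y ≤ y i} ∪ {n} : Set ℕ).Nonempty := ⟨n, Or.inr rfl⟩
  have hm : FL n y x Y ∈ ({i | x ≤ i ∧ i < n ∧ Y ≤ y i} ∪ {n} : Set ℕ) := Nat.sInf_mem hne
  rcases hm with h1 | h1
  · exact h1
  · simp only [Set.mem_singleton_iff] at h1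
    omega

lemma FL_le (n : ℕ) (y : ℕ → ℤ) (x : ℕ) (Y : ℤ) {j : ℕ}
    (h1 : x ≤ j) (h2 : j < n) (h3 : Y ≤ y j) : FL n y x Y ≤ j :=
  Nat.sInf_le (Or.inl ⟨h1, h2, h3⟩)

lemma FL_min (n : ℕ) (y : ℕ → ℤ) (x : ℕ) (Y : ℤ) {i : ℕ}
    (h1 : x ≤ i) (h2 : i < FL n y x Y) (h3 : i < n) : y i < Y := by
  by_contra hc
  push_neg at hc
  exact absurd (FL_le n y x Y h1 h3 hc) (by omega)

theorem stmt14 (n : ℕ) (y : ℕ → ℤ) (h : OneDiff n y)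
    (κ p : ℤ) (hκ : 3 ≤ κ) (hp : 1 ≤ p)
    (κ' : ℤ) (hκ' : κ' = ⌈(2 * (κ : ℚ) + 2) / ((κ : ℚ) - 2)⌉)
    (xh : ℕ) (hxh1 : 1 ≤ xh) (hxh2 : xh < n)
    (Y : ℤ) (hY : Y ≤ y xh + (2 * κ + 2) * p - 2)
    (x' : ℕ) (hx' : x' = FL n y xh (y xh + (κ - 2) * p)) (hx'n : x' < n)
    (xb : ℕ) (hxb : IsValley n y x' (y x') xb) :
    Y ≤ y xb + κ' * ((Weight n y xb : ℤ) - 1) - 2 := by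
  obtain ⟨⟨hxb1, -, hxb2, hxb3⟩, hxbmin, hxbmax⟩ := hxb
  have hκ2 : (0:ℤ) < κ - 2 := by omega
  set L := y xh + (κ - 2) * p with hLdef
  have hLgt : y xh + 1 ≤ L := by nlinarith
  have hx'n' : FL n y xh L < n := by rwa [← hx']
  obtain ⟨hx'1, -, hx'2⟩ := FL_spec n y xh L hx'n'
  rw [← hx'] at hx'1 hx'2
  have hminL : ∀ i : ℕ, xh ≤ i → i < x' → y i < L := fun i h1 h2 =>
    FL_min n y xh L h1 (by omega) (by omega)
  -- y xb ≤ y xh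
  have hbh : y xb ≤ y xh := hxbmin xh (y xh)
    ⟨hx'1, le_refl _, by linarith, fun i h1 h2 => lt_of_lt_of_le (hminL i h1 h2) hx'2⟩
  -- key: for each level t, first landing is a valley point of xb
  have key : ∀ t : ℤ, y xb ≤ t → t ≤ y x' →
      (xb ≤ FL n y xb t ∧ FL n y xb t < n ∧ IsValley n y (FL n y xb t) (y (FL n y xb t)) xb)
        ∧ y (FL n y xb t) = t := by
    intro t ht1 ht2
    set xt := FL n y xb t with hxt
    have hxtle : xt ≤ x' := FL_le n y xb t hxb1 hx'n ht2
    have hxtn : xt < n := lt_of_le_of_lt hxtle hx'n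
    obtain ⟨hxt1, -, hxt2⟩ := FL_spec n y xb t hxtn
    rw [← hxt] at hxt1 hxt2
    have hmint : ∀ i : ℕ, xb ≤ i → i < xt → y i < t := fun i h1 h2 =>
      FL_min n y xb t h1 h2 (by omega)
    have hyt : y xt = t := by
      rcases eq_or_lt_of_le hxt1 with heq | hlt
      · rw [← heq] at hxt2 ⊢
        omega
      · have h1 : y (xt - 1) < t := hmint (xt - 1) (by omega) (by omega)
        have h2 := h (xt) (by omega) hxtn
        rw [abs_le] at h2
        omega
    have htrans : ∀ a b, DLR n y xt t a b → DLR n y x' (y x') a b := by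
      rintro a b ⟨ha1, ha2, ha3, ha4⟩
      refine ⟨ha1.trans hxtle, ha2, ha3.trans ht2, fun i hi1 hi2 => ?_⟩
      rcases lt_or_ge i xt with hi | hi
      · exact lt_of_lt_of_le (ha4 i hi1 hi) ht2
      · exact hxb3 i (le_trans hxt1 hi) hi2
    refine ⟨⟨hxt1, hxtn, ?_⟩, hyt⟩
    rw [hyt]
    exact ⟨⟨hxt1, le_refl _, ht1, hmint⟩,
      fun a b hab => hxbmin a b (htrans a b hab),
      fun a hab he => hxbmax a (htrans a (y a) hab) he⟩
  -- counting
  set T : Set ℕ := {x | xb ≤ x ∧ x < n ∧ IsValley n y x (y x) xb} with hT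
  have hTfin : T.Finite := Set.Finite.subset (Set.finite_Iio n) (fun x hx => hx.2.1)
  have himg : (fun t => FL n y xb t) '' Set.Icc (y xb) (y x') ⊆ T := by
    rintro x ⟨t, ⟨ht1, ht2⟩, rfl⟩
    exact (key t ht1 ht2).1
  have hinj : Set.InjOn (fun t => FL n y xb t) (Set.Icc (y xb) (y x')) := by
    rintro t ⟨ht1, ht2⟩ u ⟨hu1, hu2⟩ he
    have h1 := (key t ht1 ht2).2
    have h2 := (key u hu1 hu2).2
    rw [← h1, ← h2]
    simp only at he
    rw [he]
  have hcard1 : ((fun t => FL n y xb t) '' Set.Icc (y xb) (y x')).ncard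
      = (Set.Icc (y xb) (y x')).ncard := Set.ncard_image_of_injOn hinj
  have hcard2 : (Set.Icc (y xb) (y x')).ncard = (y x' + 1 - y xb).toNat := by
    rw [← Finset.coe_Icc, Set.ncard_coe_finset, Int.card_Icc]
  have hcard3 : ((fun t => FL n y xb t) '' Set.Icc (y xb) (y x')).ncard ≤ Weight n y xb :=
    Set.ncard_le_ncard himg hTfin
  have hbx' : y xb ≤ y x' := hxb2
  have hWge : y x' + 1 - y xb ≤ (Weight n y xb : ℤ) := by
    have := hcard3
    rw [hcard1, hcard2] at this
    have h4 : ((y x' + 1 - y xb).toNat : ℤ) = y x' + 1 - y xb := Int.toNat_of_nonneg (by omega)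
    calc y x' + 1 - y xb = ((y x' + 1 - y xb).toNat : ℤ) := h4.symm
      _ ≤ (Weight n y xb : ℤ) := by exact_mod_cast this
  -- κ' facts
  have hκQ : (0:ℚ) < (κ:ℚ) - 2 := by
    have : (3:ℚ) ≤ (κ:ℚ) := by exact_mod_cast hκ
    linarith
  have hq1 : (2 * (κ:ℚ) + 2) / ((κ:ℚ) - 2) ≤ (κ':ℚ) := by
    rw [hκ']; exact_mod_cast Int.le_ceil _
  have hq2 : (2 * (κ:ℚ) + 2) ≤ (κ':ℚ) * ((κ:ℚ) - 2) := by
    rw [div_le_iff₀ hκQ] at hq1; linarith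
  have hκ'2 : 2 * κ + 2 ≤ κ' * (κ - 2) := by exact_mod_cast hq2
  have hκ'pos : 1 ≤ κ' := by
    rw [hκ']
    have : (0:ℚ) < (2 * (κ:ℚ) + 2) / ((κ:ℚ) - 2) := by positivity
    have := Int.ceil_pos.mpr this
    omega
  -- final arithmetic
  have hD : 0 ≤ y xh - y xb := by linarith
  have hW1 : y xh - y xb + (κ - 2) * p ≤ (Weight n y xb : ℤ) - 1 := by
    have : L ≤ y x' := hx'2
    rw [hLdef] at this
    linarith
  nlinarith [mul_le_mul_of_nonneg_left hW1 (by linarith : (0:ℤ) ≤ κ'),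
    mul_le_mul_of_nonneg_left hκ'pos hD,
    mul_le_mul_of_nonneg_right hκ'2 (by linarith : (0:ℤ) ≤ p)]
end

section
/- Let (y_0,...,y_{n-1}) be an integer sequence, x̂ ∈ {0,...,n-1}, y' an integer with y_{x̂} < y', and suppose x' = FL(x̂, y') < n with y_{x'} ≤ y' (e.g., equality holds for 1-difference sequences). Let x̄ = Valley(x', y_{x'}). Then for every integer y with y > y_{x'}, FL(x̄, y) = FL(x̂, y). -/
theorem stmt15 (n : ℕ) (y : ℕ → ℤ) (xh : ℕ) (Y' : ℤ) (hxh : xh < n)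
    (hY' : y xh < Y')
    (x' : ℕ) (hx' : x' = FL n y xh Y') (hx'n : x' < n) (hyx' : y x' ≤ Y')
    (xb : ℕ) (hxb : IsValley n y x' (y x') xb) :
    ∀ Y : ℤ, y x' < Y → FL n y xb Y = FL n y xh Y := by
  intro Y hY
  -- x' is a member of the FL set
  have hmem : x' ∈ ({i | xh ≤ i ∧ i < n ∧ Y' ≤ y i} ∪ {n} : Set ℕ) := by
    rw [hx']
    exact Nat.sInf_mem ⟨n, Or.inr rfl⟩
  have hx'left : xh ≤ x' ∧ x' < n ∧ Y' ≤ y x' := by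
    rcases hmem with h | h
    · exact h
    · simp only [Set.mem_singleton_iff] at h; omega
  obtain ⟨hxhle, -, hY'le⟩ := hx'left
  -- minimality: indices between xh and x' are below Y'
  have hminh : ∀ i, xh ≤ i → i < x' → y i < Y' := by
    intro i h1 h2
    by_contra h
    push_neg at h
    have : x' ≤ i := by
      rw [hx']
      exact Nat.sInf_le (Or.inl ⟨h1, lt_trans h2 hx'n, h⟩)
    omega
  obtain ⟨⟨hxble, -, -, hminb⟩, -, -⟩ := hxb
  -- the two FL sets are equal
  have hset : ({i | xb ≤ i ∧ i < n ∧ Y ≤ y i} ∪ {n} : Set ℕ)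
      = ({i | xh ≤ i ∧ i < n ∧ Y ≤ y i} ∪ {n} : Set ℕ) := by
    ext i
    constructor
    · rintro (⟨h1, h2, h3⟩ | h)
      · left
        refine ⟨?_, h2, h3⟩
        rcases lt_or_ge i x' with h4 | h4
        · exact absurd (hminb i h1 h4) (by linarith)
        · omega
      · exact Or.inr h
    · rintro (⟨h1, h2, h3⟩ | h)
      · left
        refine ⟨?_, h2, h3⟩
        rcases lt_or_ge i x' with h4 | h4
        · have := hminh i h1 h4; linarith
        · omega
      · exact Or.inr h
  unfold FL
  rw [hset]
end

section
/- Let κ ≥ 3 be an integer and κ' = ⌈(2κ+2)/(κ-2)⌉. For any assignment of nonnegative integers Weight(1),...,Weight(n-2) with ∑_{x=1}^{n-2} Weight(x) ≤ n, the total ladder height ∑_{x=1}^{n-2} max{κ-1, κ'·(Weight(x)-1) - 2} is at most (κ-1+κ')·n. Moreover, the function κ ↦ κ-1+⌈(2κ+2)/(κ-2)⌉ over integers κ ≥ 3 attains its minimum value 8, achieved exactly at κ ∈ {4,5}. -/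
theorem stmt16 (n : ℕ) (hn : 2 ≤ n) (κ κ' : ℤ) (hκ : 3 ≤ κ)
    (hκ' : κ' = ⌈(2 * (κ : ℚ) + 2) / ((κ : ℚ) - 2)⌉)
    (W : ℕ → ℤ) (hW : ∀ x, 0 ≤ W x)
    (hsum : ∑ x ∈ Finset.Icc 1 (n - 2), W x ≤ (n : ℤ)) :
    (∑ x ∈ Finset.Icc 1 (n - 2), max (κ - 1) (κ' * (W x - 1) - 2) ≤ (κ - 1 + κ') * n) ∧
    8 ≤ κ - 1 + κ' ∧ (κ - 1 + κ' = 8 ↔ κ = 4 ∨ κ = 5) := by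
  have hκQ : (3 : ℚ) ≤ (κ : ℚ) := by exact_mod_cast hκ
  have hden : (0 : ℚ) < (κ : ℚ) - 2 := by linarith
  have hq2 : (2 : ℚ) < (2 * (κ : ℚ) + 2) / ((κ : ℚ) - 2) := by
    rw [lt_div_iff₀ hden]; linarith
  have hκ'3 : 3 ≤ κ' := by
    have : (2 : ℤ) < κ' := by
      rw [hκ']
      exact Int.lt_ceil.mpr (by exact_mod_cast hq2)
    omega
  constructor
  · -- summation bound
    have hcard : (Finset.Icc 1 (n - 2)).card = n - 2 := by
      rw [Nat.card_Icc]; omega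
    have hb : ∀ x ∈ Finset.Icc 1 (n - 2),
        max (κ - 1) (κ' * (W x - 1) - 2) ≤ (κ - 1) + κ' * W x := by
      intro x _
      apply max_le
      · nlinarith [hW x, hκ'3]
      · nlinarith [hW x, hκ'3]
    calc ∑ x ∈ Finset.Icc 1 (n - 2), max (κ - 1) (κ' * (W x - 1) - 2)
        ≤ ∑ x ∈ Finset.Icc 1 (n - 2), ((κ - 1) + κ' * W x) := Finset.sum_le_sum hb
      _ = ((n - 2 : ℕ) : ℤ) * (κ - 1) + κ' * ∑ x ∈ Finset.Icc 1 (n - 2), W x := by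
          rw [Finset.sum_add_distrib, Finset.sum_const, hcard, ← Finset.mul_sum,
            nsmul_eq_mul]
      _ ≤ (n : ℤ) * (κ - 1) + κ' * (n : ℤ) := by
          have h1 : ((n - 2 : ℕ) : ℤ) ≤ (n : ℤ) := by
            have := Nat.sub_le n 2
            exact_mod_cast this
          have h2 : (0 : ℤ) ≤ κ - 1 := by omega
          have h3 : (0 : ℤ) ≤ κ' := by omega
          have := mul_le_mul_of_nonneg_right h1 h2
          have := mul_le_mul_of_nonneg_left hsum h3
          linarith
      _ = (κ - 1 + κ') * (n : ℤ) := by ring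
  · -- minimum of κ - 1 + κ'
    by_cases hle : κ ≤ 7
    · interval_cases κ
      · have h : κ' = 8 := by rw [hκ', Int.ceil_eq_iff]; norm_num
        omega
      · have h : κ' = 5 := by rw [hκ', Int.ceil_eq_iff]; norm_num
        omega
      · have h : κ' = 4 := by rw [hκ', Int.ceil_eq_iff]; norm_num
        omega
      · have h : κ' = 4 := by rw [hκ', Int.ceil_eq_iff]; norm_num
        omega
      · have h : κ' = 4 := by rw [hκ', Int.ceil_eq_iff]; norm_num
        omega
    · have h8 : (8 : ℤ) ≤ κ := by omega
      have h8Q : (8 : ℚ) ≤ (κ : ℚ) := by exact_mod_cast h8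
      have hceil : κ' = 3 := by
        rw [hκ', Int.ceil_eq_iff]
        constructor
        · push_cast
          rw [lt_div_iff₀ hden]; linarith
        · rw [div_le_iff₀ hden]; push_cast; linarith
      refine ⟨by omega, ?_⟩
      constructor
      · intro h; omega
      · rintro (h | h) <;> omega
end

section
/- Let T be a rooted tree, P = (v_0,...,v_{2n-2}) its Euler tour with corresponding depth sequence (d_0,...,d_{2n-2}), let v be a node of T of depth d_v occurring at position i in P, and let d be an integer with 0 ≤ d ≤ d_v. Let j = FS(i, d) = min{k ≥ i : d_k ≤ d} in the depth sequence. Then j < 2n-1, and v_j is the ancestor of v in T of depth d. -/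
theorem stmt18_aux (n : ℕ) (parent : Fin n → Fin n) (depth : Fin n → ℕ) (root : Fin n)
    (hroot : parent root = root) (hdroot : depth root = 0)
    (hdepth : ∀ u, u ≠ root → depth (parent u) + 1 = depth u)
    (v : ℕ → Fin n)
    (hstep : ∀ k, k + 1 ≤ 2 * n - 2 → v (k + 1) = parent (v k) ∨ v k = parent (v (k + 1)))
    (hend : v (2 * n - 2) = root) :
    ∀ m i d, 2 * n - 2 - i ≤ m → i ≤ 2 * n - 2 → d ≤ depth (v i) →
      v (sInf {k | i ≤ k ∧ k ≤ 2 * n - 2 ∧ depth (v k) ≤ d})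
        = parent^[depth (v i) - d] (v i) := by
  intro m
  induction m using Nat.strong_induction_on with
  | _ m IH =>
  intro i d hm hi hd
  have droot : depth (v (2 * n - 2)) = 0 := by rw [hend, hdroot]
  by_cases hcase : depth (v i) ≤ d
  · have hde : depth (v i) = d := le_antisymm hcase hd
    have hiA : i ∈ {k | i ≤ k ∧ k ≤ 2 * n - 2 ∧ depth (v k) ≤ d} := ⟨le_refl _, hi, hcase⟩
    have h1 : sInf {k | i ≤ k ∧ k ≤ 2 * n - 2 ∧ depth (v k) ≤ d} ≤ i := Nat.sInf_le hiA
    have h2 := (Nat.sInf_mem (⟨i, hiA⟩ : Set.Nonempty _)).1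
    have : sInf {k | i ≤ k ∧ k ≤ 2 * n - 2 ∧ depth (v k) ≤ d} = i := le_antisymm h1 h2
    rw [this, hde, Nat.sub_self]
    simp
  · push_neg at hcase
    have hvine : v i ≠ root := by
      intro e; rw [e, hdroot] at hcase; omega
    have hilt : i < 2 * n - 2 := by
      rcases lt_or_eq_of_le hi with h' | h'
      · exact h'
      · exfalso; rw [h', droot] at hcase; omega
    rcases hstep i (by omega) with hA1 | hB
    · -- going up: v (i+1) = parent (v i)
      have hd1 : depth (v (i + 1)) + 1 = depth (v i) := by
        rw [hA1]; exact hdepth _ hvine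
      have hsets : {k | i ≤ k ∧ k ≤ 2 * n - 2 ∧ depth (v k) ≤ d}
          = {k | i + 1 ≤ k ∧ k ≤ 2 * n - 2 ∧ depth (v k) ≤ d} := by
        ext k
        simp only [Set.mem_setOf_eq]
        constructor
        · rintro ⟨h1, h2, h3⟩
          refine ⟨?_, h2, h3⟩
          rcases eq_or_lt_of_le h1 with e | l
          · exfalso; rw [← e] at h3; omega
          · omega
        · rintro ⟨h1, h2, h3⟩
          exact ⟨by omega, h2, h3⟩
      have key := IH (2 * n - 2 - (i + 1)) (by omega) (i + 1) d le_rfl (by omega) (by omega)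
      rw [hsets, key]
      rw [show depth (v i) - d = depth (v (i + 1)) - d + 1 from by omega,
        Function.iterate_succ_apply, hA1]
    · -- going down: v i = parent (v (i+1))
      have hne1 : v (i + 1) ≠ root := by
        intro e; rw [e, hroot] at hB; exact hvine hB
      have hd1 : depth (v i) + 1 = depth (v (i + 1)) := by
        have := hdepth _ hne1
        rw [← hB] at this; exact this
      have h1 := IH (2 * n - 2 - (i + 1)) (by omega) (i + 1) (depth (v i)) le_rfl
        (by omega) (by omega)
      set j2 := sInf {k | i + 1 ≤ k ∧ k ≤ 2 * n - 2 ∧ depth (v k) ≤ depth (v i)} with hj2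
      have hj2mem : j2 ∈ {k | i + 1 ≤ k ∧ k ≤ 2 * n - 2 ∧ depth (v k) ≤ depth (v i)} :=
        Nat.sInf_mem ⟨2 * n - 2, by omega, le_refl _, by omega⟩
      have hvj2 : v j2 = v i := by
        rw [h1, show depth (v (i + 1)) - depth (v i) = 1 from by omega,
          Function.iterate_one, ← hB]
      have hdj2 : depth (v j2) = depth (v i) := by rw [hvj2]
      have hj2a : i + 1 ≤ j2 := hj2mem.1
      have hj2b : j2 ≤ 2 * n - 2 := hj2mem.2.1
      have h2 := IH (2 * n - 2 - j2) (by omega) j2 d le_rfl hj2b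
        (by rw [hdj2]; exact le_of_lt hcase)
      have hsets : {k | i ≤ k ∧ k ≤ 2 * n - 2 ∧ depth (v k) ≤ d}
          = {k | j2 ≤ k ∧ k ≤ 2 * n - 2 ∧ depth (v k) ≤ d} := by
        ext k
        simp only [Set.mem_setOf_eq]
        constructor
        · rintro ⟨h1k, h2k, h3k⟩
          refine ⟨?_, h2k, h3k⟩
          by_contra hlt
          push_neg at hlt
          have hki : i + 1 ≤ k := by
            rcases eq_or_lt_of_le h1k with e | l
            · exfalso; rw [← e] at h3k; omega
            · omega
          have : j2 ≤ k := Nat.sInf_le ⟨hki, h2k, by omega⟩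
          omega
        · rintro ⟨h1k, h2k, h3k⟩
          have := hj2mem.1
          exact ⟨by omega, h2k, h3k⟩
      rw [hsets, h2, hvj2]


/-- Euler-tour / find-smaller correctness for level ancestors.

`T` is a rooted tree on `n` nodes, given by its parent function and root
(with `parent root = root`) and its depth function. `v 0, …, v (2n-2)` is the
Euler tour of `T`: consecutive entries are related by a parent/child step,
and the tour ends at the root. If the node `v i` has depth at least `d` and
`j = FS(i, d)` is the first position `k ≥ i` of the tour whose depth is at
most `d`, then `j < 2n-1` and `v j` is the ancestor of `v i` of depth `d`,
i.e. the `(depth (v i) - d)`-fold parent of `v i`. -/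
theorem stmt18 (n : ℕ) (hn : 1 ≤ n)
    (parent : Fin n → Fin n) (depth : Fin n → ℕ) (root : Fin n)
    (hroot : parent root = root) (hdroot : depth root = 0)
    (hdepth : ∀ u, u ≠ root → depth (parent u) + 1 = depth u)
    (v : ℕ → Fin n)
    (hstep : ∀ k, k + 1 ≤ 2 * n - 2 → v (k + 1) = parent (v k) ∨ v k = parent (v (k + 1)))
    (hall : ∀ u : Fin n, ∃ k ≤ 2 * n - 2, v k = u)
    (hend : v (2 * n - 2) = root)
    (i : ℕ) (hi : i ≤ 2 * n - 2) (d : ℕ) (hd : d ≤ depth (v i))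
    (j : ℕ) (hj : j = sInf ({k | i ≤ k ∧ k ≤ 2 * n - 2 ∧ depth (v k) ≤ d} ∪ {2 * n - 1})) :
    j < 2 * n - 1 ∧ v j = parent^[depth (v i) - d] (v i) := by
  have hS : (2 * n - 2) ∈ {k | i ≤ k ∧ k ≤ 2 * n - 2 ∧ depth (v k) ≤ d} :=
    ⟨hi, le_refl _, by rw [hend, hdroot]; exact Nat.zero_le d⟩
  have hne : ({k | i ≤ k ∧ k ≤ 2 * n - 2 ∧ depth (v k) ≤ d} ∪ {2 * n - 1}).Nonempty :=
    ⟨2 * n - 2, Or.inl hS⟩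
  have hle : j ≤ 2 * n - 2 := by rw [hj]; exact Nat.sInf_le (Or.inl hS)
  have hjlt : j < 2 * n - 1 := by omega
  refine ⟨hjlt, ?_⟩
  have hmem : j ∈ {k | i ≤ k ∧ k ≤ 2 * n - 2 ∧ depth (v k) ≤ d} ∪ {2 * n - 1} :=
    hj ▸ Nat.sInf_mem hne
  have hmemS : j ∈ {k | i ≤ k ∧ k ≤ 2 * n - 2 ∧ depth (v k) ≤ d} := by
    rcases hmem with h | h
    · exact h
    · exfalso; rw [Set.mem_singleton_iff] at h; omega
  have heq : j = sInf {k | i ≤ k ∧ k ≤ 2 * n - 2 ∧ depth (v k) ≤ d} := by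
    apply le_antisymm
    · rw [hj]
      exact Nat.sInf_le (Or.inl (Nat.sInf_mem ⟨2 * n - 2, hS⟩))
    · exact Nat.sInf_le hmemS
  rw [heq]
  exact stmt18_aux n parent depth root hroot hdroot hdepth v hstep hend
    (2 * n - 2 - i) i d le_rfl hi hd
end
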